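/- arXiv:1208.5823 — 5 statements merged into one kernel-verified Lean document; each statement's English description precedes it below -/
import Mathlib

section
/- (Fourth-moment deviation bound for the diagonal quadratic form.) Let x_1, …, x_n be independent real random variables with mean 0 and variance 1 and max_i E|x_i|^l ≤ ν_l for l = 4 and l = 8 (with ν_8 < ∞), and let M_n = (m_{ij}) be a deterministic nonnegative definite n×n real matrix. Then there is an absolute constant C > 0 such that E| Σ_{i=1}^n m_{ii}·x_i^2 − tr M_n |^4 ≤ C·( ν_8·tr(M_n^4) + (ν_4·tr(M_n^2))^2 ). -/
/-!
Put `y i = m_ii (x_i² - 1)`, so the deviation is `∑ i, y i`, a sum of independent centred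
variables. Expanding `(S + y)⁴` for independent centred `S`, `y` kills the odd mixed moments, and
induction gives `E (∑ y)⁴ ≤ ∑ E y⁴ + 3 (∑ E y²)²`. Coordinatewise `E y² ≤ ν₄ m_ii²` and
`E y⁴ ≤ 2 ν₈ m_ii⁴`, while symmetry of `M` gives `m_ii² ≤ (M²)_ii` and `m_ii⁴ ≤ (M⁴)_ii`;
so `C = 3`.

No integrability needs to be assumed: if `(∑ y)⁴` is not integrable its integral is `0`, and if it
is, Fubini on the joint law of `(∑_{j ≠ i} y j, y i)` puts each `y i` in `L⁴`.
-/

open MeasureTheory ProbabilityTheory Finset Matrix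
open scoped ENNReal

namespace ProbabilityTheory

variable {Ω : Type*} {mΩ : MeasurableSpace Ω} {μ : Measure Ω}

lemma _root_.MeasureTheory.memLp_of_integrable_pow {X : Ω → ℝ} {n : ℕ} (hn : Even n) (hn0 : n ≠ 0)
    (hX : AEStronglyMeasurable X μ) (h : Integrable (fun ω => X ω ^ n) μ) : MemLp X n μ := by
  refine (integrable_norm_rpow_iff hX (by exact_mod_cast hn0) (by simp)).1 ?_
  simpa [hn.pow_abs] using h

variable [IsProbabilityMeasure μ]

lemma _root_.MeasureTheory.MemLp.integrable_pow_of_le {X : Ω → ℝ} {n k : ℕ} (hX : MemLp X n μ)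
    (hk : k ≤ n) : Integrable (fun ω => X ω ^ k) μ := by
  refine (integrable_norm_iff (hX.aestronglyMeasurable.pow k)).1 ?_
  simpa [norm_pow] using (hX.mono_exponent (by exact_mod_cast hk)).integrable_norm_pow'

lemma IndepFun.integral_add_pow {X Y : Ω → ℝ} {n : ℕ} (hXY : X ⟂ᵢ[μ] Y) (hX : MemLp X n μ)
    (hY : MemLp Y n μ) :
    ∫ ω, (X ω + Y ω) ^ n ∂μ =
      ∑ k ∈ range (n + 1), (∫ ω, X ω ^ k ∂μ) * (∫ ω, Y ω ^ (n - k) ∂μ) * n.choose k := by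
  have hpow (j k : ℕ) : (fun ω => X ω ^ j) ⟂ᵢ[μ] (fun ω => Y ω ^ k) :=
    hXY.comp (measurable_id.pow_const j) (measurable_id.pow_const k)
  simp_rw [add_pow]
  rw [integral_finsetSum _ fun k hk => ?_]
  · refine sum_congr rfl fun k _ => ?_
    rw [integral_mul_const, (hpow k (n - k)).integral_fun_mul_eq_mul_integral
      (hX.aestronglyMeasurable.pow k) (hY.aestronglyMeasurable.pow (n - k))]
  · exact ((hpow k (n - k)).integrable_mul (hX.integrable_pow_of_le (mem_range_succ_iff.1 hk))
      (hY.integrable_pow_of_le (Nat.sub_le n k))).mul_const _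

lemma IndepFun.integral_add_pow_four_of_integral_eq_zero {X Y : Ω → ℝ} (hXY : X ⟂ᵢ[μ] Y)
    (hX : MemLp X 4 μ) (hY : MemLp Y 4 μ) (hX0 : ∫ ω, X ω ∂μ = 0) (hY0 : ∫ ω, Y ω ∂μ = 0) :
    ∫ ω, (X ω + Y ω) ^ 4 ∂μ =
      ∫ ω, X ω ^ 4 ∂μ + 6 * (∫ ω, X ω ^ 2 ∂μ) * (∫ ω, Y ω ^ 2 ∂μ) + ∫ ω, Y ω ^ 4 ∂μ := by
  rw [hXY.integral_add_pow (n := 4) (by exact_mod_cast hX) (by exact_mod_cast hY)]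
  simp [sum_range_succ, hX0, hY0, Nat.choose]
  ring

lemma IndepFun.memLp_right_of_memLp_add {A B : Ω → ℝ} {p : ℝ≥0∞} (hp : p ≠ ∞)
    (hA : Measurable A) (hB : Measurable B) (hAB : A ⟂ᵢ[μ] B) (h : MemLp (A + B) p μ) :
    MemLp B p μ := by
  rcases eq_or_ne p 0 with rfl | hp0
  · exact memLp_zero_iff_aestronglyMeasurable.2 hB.aestronglyMeasurable
  have : IsProbabilityMeasure (μ.map A) := Measure.isProbabilityMeasure_map hA.aemeasurable
  have hlaw : μ.map (fun ω => (A ω, B ω)) = (μ.map A).prod (μ.map B) :=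
    (indepFun_iff_map_prod_eq_prod_map_map hA.aemeasurable hB.aemeasurable).1 hAB
  have hjoint :
      Integrable (fun q : ℝ × ℝ => ‖q.1 + q.2‖ ^ p.toReal) ((μ.map A).prod (μ.map B)) := by
    have hcont : Continuous fun q : ℝ × ℝ => ‖q.1 + q.2‖ ^ p.toReal :=
      (by fun_prop : Continuous fun q : ℝ × ℝ => ‖q.1 + q.2‖).rpow_const
        fun _ => Or.inr ENNReal.toReal_nonneg
    rw [← hlaw, integrable_map_measure hcont.aestronglyMeasurable (hA.prodMk hB).aemeasurable]
    exact h.integrable_norm_rpow hp0 hp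
  -- the joint law is a product, so by Fubini some translate `c + B` of `B` lies in `L^p`
  obtain ⟨c, hc⟩ := hjoint.prod_right_ae.exists
  have hcB : MemLp (fun b => c + b) p (μ.map B) :=
    (integrable_norm_rpow_iff (by fun_prop) hp0 hp).1 hc
  have hid : MemLp id p (μ.map B) := by
    convert hcB.sub (memLp_const c) using 1
    ext; simp
  exact (memLp_map_measure_iff (by fun_prop) hB.aemeasurable).1 hid

theorem iIndepFun.integral_sum_sq {ι : Type*} {Y : ι → Ω → ℝ} (hind : iIndepFun Y μ)
    {s : Finset ι} (hY : ∀ i ∈ s, MemLp (Y i) 2 μ) (hmean : ∀ i ∈ s, ∫ ω, Y i ω ∂μ = 0) :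
    ∫ ω, (∑ i ∈ s, Y i ω) ^ 2 ∂μ = ∑ i ∈ s, ∫ ω, Y i ω ^ 2 ∂μ := by
  have hS : ∫ ω, ∑ i ∈ s, Y i ω ∂μ = 0 := by
    rw [integral_finsetSum _ fun i hi => (hY i hi).integrable one_le_two]
    exact sum_eq_zero hmean
  have hmeas : ∀ i ∈ s, AEMeasurable (Y i) μ := fun i hi =>
    (hY i hi).aestronglyMeasurable.aemeasurable
  calc ∫ ω, (∑ i ∈ s, Y i ω) ^ 2 ∂μ = variance (∑ i ∈ s, Y i) μ := by
        rw [variance_of_integral_eq_zero (Finset.aemeasurable_sum s hmeas) (by simpa using hS)]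
        simp
    _ = ∑ i ∈ s, variance (Y i) μ := IndepFun.variance_sum hY fun i _ j _ hij => hind.indepFun hij
    _ = ∑ i ∈ s, ∫ ω, Y i ω ^ 2 ∂μ := sum_congr rfl fun i hi =>
        variance_of_integral_eq_zero (hmeas i hi) (hmean i hi)

theorem iIndepFun.integral_sum_pow_four_le_of_memLp {ι : Type*} {Y : ι → Ω → ℝ}
    (hm : ∀ i, Measurable (Y i)) (hind : iIndepFun Y μ) {s : Finset ι}
    (hY : ∀ i ∈ s, MemLp (Y i) 4 μ) (hmean : ∀ i ∈ s, ∫ ω, Y i ω ∂μ = 0) :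
    ∫ ω, (∑ i ∈ s, Y i ω) ^ 4 ∂μ ≤
      ∑ i ∈ s, ∫ ω, Y i ω ^ 4 ∂μ + 3 * (∑ i ∈ s, ∫ ω, Y i ω ^ 2 ∂μ) ^ 2 := by
  classical
  induction s using Finset.induction_on with
  | empty => simp
  | insert a s ha ih =>
    have hY' : ∀ i ∈ s, MemLp (Y i) 4 μ := fun i hi => hY i (mem_insert_of_mem hi)
    have hmean' : ∀ i ∈ s, ∫ ω, Y i ω ∂μ = 0 := fun i hi => hmean i (mem_insert_of_mem hi)
    have hS0 : ∫ ω, ∑ i ∈ s, Y i ω ∂μ = 0 := by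
      rw [integral_finsetSum _ fun i hi => (hY' i hi).integrable (by norm_num)]
      exact sum_eq_zero hmean'
    have hS2 : ∫ ω, (∑ i ∈ s, Y i ω) ^ 2 ∂μ = ∑ i ∈ s, ∫ ω, Y i ω ^ 2 ∂μ :=
      hind.integral_sum_sq (fun i hi => (hY' i hi).mono_exponent (by norm_num)) hmean'
    have hindep : Y a ⟂ᵢ[μ] fun ω => ∑ i ∈ s, Y i ω := by
      simpa [← Finset.sum_apply] using (hind.indepFun_finsetSum_of_notMem hm ha).symm
    simp only [sum_insert ha]
    rw [hindep.integral_add_pow_four_of_integral_eq_zero (hY a (mem_insert_self a s))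
      (memLp_finsetSum s hY') (hmean a (mem_insert_self a s)) hS0, hS2]
    nlinarith [ih hY' hmean', sq_nonneg (∫ ω, Y a ω ^ 2 ∂μ)]

theorem iIndepFun.integral_sum_pow_four_le {ι : Type*} [Fintype ι] {Y : ι → Ω → ℝ}
    (hm : ∀ i, Measurable (Y i)) (hind : iIndepFun Y μ) (hmean : ∀ i, ∫ ω, Y i ω ∂μ = 0) :
    ∫ ω, (∑ i, Y i ω) ^ 4 ∂μ ≤ ∑ i, ∫ ω, Y i ω ^ 4 ∂μ + 3 * (∑ i, ∫ ω, Y i ω ^ 2 ∂μ) ^ 2 := by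
  classical
  by_cases hS : Integrable (fun ω => (∑ i, Y i ω) ^ 4) μ
  · refine hind.integral_sum_pow_four_le_of_memLp hm (fun i _ => ?_) fun i _ => hmean i
    have hsum : MemLp (∑ j, Y j) 4 μ := by
      simpa [← Finset.sum_apply] using memLp_of_integrable_pow (n := 4) (by decide) (by norm_num)
        (Finset.measurable_sum univ fun j _ => hm j).aestronglyMeasurable hS
    rw [← sum_erase_add _ _ (mem_univ i)] at hsum
    exact (hind.indepFun_finsetSum_of_notMem hm (notMem_erase i univ)).memLp_right_of_memLp_add
      (by simp) (by fun_prop) (hm i) hsum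
  · rw [integral_undef hS]
    positivity

lemma integral_sq_sub_one_sq_le {X : Ω → ℝ} (h2 : ∫ ω, X ω ^ 2 ∂μ = 1) :
    ∫ ω, (X ω ^ 2 - 1) ^ 2 ∂μ ≤ ∫ ω, X ω ^ 4 ∂μ := by
  by_cases hint : Integrable (fun ω => (X ω ^ 2 - 1) ^ 2) μ
  · have hX2 : Integrable (fun ω => X ω ^ 2) μ := .of_integral_ne_zero (by simp [h2])
    have hrest : Integrable (fun ω => 2 * X ω ^ 2 - 1) μ :=
      (hX2.const_mul 2).sub (integrable_const 1)
    have hsplit : (fun ω => X ω ^ 4) = fun ω => (X ω ^ 2 - 1) ^ 2 + (2 * X ω ^ 2 - 1) := by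
      ext; ring
    rw [hsplit, integral_add hint hrest, integral_sub (hX2.const_mul 2) (integrable_const 1),
      integral_const_mul, h2]
    simp
  · rw [integral_undef hint]
    exact integral_nonneg fun ω => by positivity

lemma integral_sq_sub_one_pow_four_le {X : Ω → ℝ} (hX : AEStronglyMeasurable X μ)
    (h2 : ∫ ω, X ω ^ 2 ∂μ = 1) : ∫ ω, (X ω ^ 2 - 1) ^ 4 ∂μ ≤ 2 * ∫ ω, X ω ^ 8 ∂μ := by
  by_cases hint : Integrable (fun ω => (X ω ^ 2 - 1) ^ 4) μ
  · have hX2 : Integrable (fun ω => X ω ^ 2) μ := .of_integral_ne_zero (by simp [h2])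
    have hX8 : Integrable (fun ω => X ω ^ 8) μ := by
      refine ((hint.const_mul 8).add (integrable_const 8)).mono' (hX.pow 8)
        (ae_of_all _ fun ω => ?_)
      rw [Real.norm_eq_abs, abs_of_nonneg (by positivity)]
      show X ω ^ 8 ≤ 8 * (X ω ^ 2 - 1) ^ 4 + 8
      nlinarith [sq_nonneg (X ω ^ 2 - 2), sq_nonneg ((X ω ^ 2 - 1) ^ 2 - 1),
        sq_nonneg (X ω ^ 4 - 2 * X ω ^ 2), sq_nonneg (X ω ^ 2 - 1), sq_nonneg (X ω)]
    have hX8c (c : ℝ) : Integrable (fun ω => X ω ^ 8 + c) μ := hX8.add (integrable_const c)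
    have hint8c (c : ℝ) : ∫ ω, (X ω ^ 8 + c) ∂μ = ∫ ω, X ω ^ 8 ∂μ + c := by
      simp [integral_add hX8 (integrable_const c)]
    have h8 : 1 ≤ ∫ ω, X ω ^ 8 ∂μ := by
      have := integral_mono (hX2.const_mul 4) (hX8c 3) fun ω =>
        show 4 * X ω ^ 2 ≤ X ω ^ 8 + 3 by
          nlinarith [mul_nonneg (sq_nonneg (X ω ^ 2 - 1)) (sq_nonneg (X ω ^ 2 + 1)),
            sq_nonneg (X ω)]
      rw [integral_const_mul, h2, hint8c] at this
      linarith
    calc ∫ ω, (X ω ^ 2 - 1) ^ 4 ∂μ ≤ ∫ ω, (X ω ^ 8 + 1) ∂μ :=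
          integral_mono hint (hX8c 1) fun ω => by
            nlinarith [mul_nonneg (sq_nonneg (X ω)) (sq_nonneg (X ω ^ 2 - 3 / 4)), sq_nonneg (X ω)]
      _ ≤ 2 * ∫ ω, X ω ^ 8 ∂μ := by linarith [hint8c 1]
  · rw [integral_undef hint]
    exact mul_nonneg zero_le_two (integral_nonneg fun ω => by positivity)

lemma integral_mul_sq_sub_one_sq_le {X : Ω → ℝ} {c d ν : ℝ} (h2 : ∫ ω, X ω ^ 2 ∂μ = 1)
    (h4 : ∫ ω, X ω ^ 4 ∂μ ≤ ν) (hcd : c ^ 2 ≤ d) : ∫ ω, (c * (X ω ^ 2 - 1)) ^ 2 ∂μ ≤ ν * d := by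
  simp_rw [mul_pow, integral_const_mul]
  calc c ^ 2 * ∫ ω, (X ω ^ 2 - 1) ^ 2 ∂μ ≤ d * ν :=
        mul_le_mul hcd ((integral_sq_sub_one_sq_le h2).trans h4)
          (integral_nonneg fun ω => by positivity) ((sq_nonneg c).trans hcd)
    _ = ν * d := mul_comm d ν

lemma integral_mul_sq_sub_one_pow_four_le {X : Ω → ℝ} {c d ν : ℝ} (hX : AEStronglyMeasurable X μ)
    (h2 : ∫ ω, X ω ^ 2 ∂μ = 1) (h8 : ∫ ω, X ω ^ 8 ∂μ ≤ ν) (hcd : c ^ 4 ≤ d) :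
    ∫ ω, (c * (X ω ^ 2 - 1)) ^ 4 ∂μ ≤ 2 * ν * d := by
  simp_rw [mul_pow, integral_const_mul]
  calc c ^ 4 * ∫ ω, (X ω ^ 2 - 1) ^ 4 ∂μ ≤ d * (2 * ν) :=
        mul_le_mul hcd ((integral_sq_sub_one_pow_four_le hX h2).trans (by linarith))
          (integral_nonneg fun ω => by positivity) ((by positivity : (0 : ℝ) ≤ c ^ 4).trans hcd)
    _ = 2 * ν * d := mul_comm _ _

end ProbabilityTheory

namespace Matrix

variable {n R : Type*} [Fintype n] [DecidableEq n] [CommRing R] [LinearOrder R]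
  [IsStrictOrderedRing R] {A : Matrix n n R}

lemma IsSymm.sq_apply_self_le (hA : A.IsSymm) (i : n) : A i i ^ 2 ≤ (A ^ 2) i i := by
  rw [sq A, mul_apply, sq]
  refine single_le_sum (f := fun j => A i j * A j i) (fun j _ => ?_) (mem_univ i)
  simpa only [hA.apply i j] using mul_self_nonneg (A i j)

lemma IsSymm.pow_four_apply_self_le (hA : A.IsSymm) (i : n) : A i i ^ 4 ≤ (A ^ 4) i i :=
  calc A i i ^ 4 = (A i i ^ 2) ^ 2 := by ring
    _ ≤ (A ^ 2) i i ^ 2 := pow_le_pow_left₀ (sq_nonneg _) (hA.sq_apply_self_le i) 2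
    _ ≤ ((A ^ 2) ^ 2) i i := (hA.pow 2).sq_apply_self_le i
    _ = (A ^ 4) i i := by rw [← pow_mul]

end Matrix

/-- **Fourth-moment deviation bound for the diagonal quadratic form.**
There is an absolute constant `C > 0` such that for independent real random variables
`x_1, …, x_n` with mean `0`, variance `1`, `E|x_i|^4 ≤ ν₄` and `E|x_i|^8 ≤ ν₈`, and any
deterministic nonnegative definite `n × n` real matrix `M`,
`E|Σ_i m_ii x_i² - tr M|⁴ ≤ C (ν₈ tr(M⁴) + (ν₄ tr(M²))²)`. -/
theorem diagonal_quadratic_form_fourth_moment_bound :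
    ∃ C : ℝ, 0 < C ∧
      ∀ (n : ℕ) (Ω : Type) (_ : MeasureSpace Ω) (_ : IsProbabilityMeasure (ℙ : Measure Ω))
        (x : Fin n → Ω → ℝ) (ν₄ ν₈ : ℝ),
        (∀ i, Measurable (x i)) →
        iIndepFun x ℙ →
        (∀ i, ∫ ω, x i ω ∂ℙ = 0) →
        (∀ i, ∫ ω, (x i ω) ^ 2 ∂ℙ = 1) →
        (∀ i, ∫ ω, |x i ω| ^ 4 ∂ℙ ≤ ν₄) →
        (∀ i, ∫ ω, |x i ω| ^ 8 ∂ℙ ≤ ν₈) →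
        ∀ M : Matrix (Fin n) (Fin n) ℝ, M.PosSemidef →
          ∫ ω, |(∑ i, M i i * (x i ω) ^ 2) - Matrix.trace M| ^ 4 ∂ℙ ≤
            C * (ν₈ * Matrix.trace (M ^ 4) + (ν₄ * Matrix.trace (M ^ 2)) ^ 2) := by
  refine ⟨3, by norm_num, fun n Ω _ _ x ν₄ ν₈ hx hind _ hvar h4 h8 M hM => ?_⟩
  simp only [(by decide : Even 4).pow_abs, (by decide : Even 8).pow_abs] at h4 h8 ⊢
  have hMsymm : M.IsSymm := isHermitian_iff_isSymm.1 hM.1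
  set y : Fin n → Ω → ℝ := fun i ω => M i i * (x i ω ^ 2 - 1)
  have hdev (ω : Ω) : (∑ i, M i i * x i ω ^ 2) - M.trace = ∑ i, y i ω := by
    simp [y, trace, mul_sub]
  have hmean (i : Fin n) : ∫ ω, y i ω = 0 := by
    have hx2 : Integrable (fun ω => x i ω ^ 2) := .of_integral_ne_zero (by simp [hvar i])
    simp [y, integral_const_mul, integral_sub hx2 (integrable_const 1), hvar]
  have hsum2 : ∑ i, ∫ ω, y i ω ^ 2 ≤ ν₄ * trace (M ^ 2) := by
    rw [trace, mul_sum]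
    exact sum_le_sum fun i _ =>
      integral_mul_sq_sub_one_sq_le (hvar i) (h4 i) (hMsymm.sq_apply_self_le i)
  have hsum4 : ∑ i, ∫ ω, y i ω ^ 4 ≤ 2 * ν₈ * trace (M ^ 4) := by
    rw [trace, mul_sum]
    exact sum_le_sum fun i _ => integral_mul_sq_sub_one_pow_four_le (hx i).aestronglyMeasurable
      (hvar i) (h8 i) (hMsymm.pow_four_apply_self_le i)
  have hyind : iIndepFun y ℙ := hind.comp (fun i t => M i i * (t ^ 2 - 1)) fun i => by fun_prop
  calc ∫ ω, ((∑ i, M i i * x i ω ^ 2) - M.trace) ^ 4 = ∫ ω, (∑ i, y i ω) ^ 4 := by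
        simp_rw [hdev]
    _ ≤ (∑ i, ∫ ω, y i ω ^ 4) + 3 * (∑ i, ∫ ω, y i ω ^ 2) ^ 2 :=
        hyind.integral_sum_pow_four_le (fun i => by fun_prop) hmean
    _ ≤ 3 * (ν₈ * trace (M ^ 4) + (ν₄ * trace (M ^ 2)) ^ 2) := by
        have hsum2_nonneg : 0 ≤ ∑ i, ∫ ω, y i ω ^ 2 :=
          sum_nonneg fun i _ => integral_nonneg fun ω => by positivity
        have hsum4_nonneg : 0 ≤ ∑ i, ∫ ω, y i ω ^ 4 :=
          sum_nonneg fun i _ => integral_nonneg fun ω => by positivity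
        nlinarith [pow_le_pow_left₀ hsum2_nonneg hsum2 2]
end

section
/- (Fourth-moment bound for the off-diagonal quadratic form.) Let x_1, …, x_n be independent real random variables with mean 0 and variance 1 and max_i E|x_i|^4 ≤ ν_4 < ∞, and let M_n = (m_{ij}) be a deterministic nonnegative definite n×n real matrix. Then there is an absolute constant C > 0 such that E| Σ_{u≠v} m_{uv}·x_u·x_v |^4 ≤ C·ν_4^2·(tr(M_n^2))^2. -/
/-!
Write the off-diagonal form as `Q = ∑ₖ xₖ Lₖ` with `Lₖ = ∑_{u<k} (m_uk + m_ku) x_u`. The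
summands `dₖ = xₖ Lₖ` are martingale differences: `xₖ` is centred and independent of everything
built from the `x_u`, `u < k`. Expanding `(F + D)⁴` and using Cauchy–Schwarz and AM–GM shows that
`√E(F + D)⁴ ≤ √E F⁴ + 4 √E D⁴` whenever `E[F³ D] = 0`, hence `√E Q⁴ ≤ 4 ∑ₖ √E dₖ⁴`. The same
inequality for the linear forms gives `√E Lₖ⁴ ≤ 4 √ν₄ ∑_{u<k} (m_uk + m_ku)²`, and independence
gives `E dₖ⁴ = E xₖ⁴ · E Lₖ⁴`, so `√E Q⁴ ≤ 16 ν₄ ∑_{u<k} (m_uk + m_ku)² ≤ 32 ν₄ tr(M²)`.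

A variable without fourth moment has `∫ |xᵢ|⁴ = 0` as a Bochner integral, so `ν₄` does not
control it. If it occurs in `Q`, then `Q` is an affine function of `xᵢ` whose coefficients are
independent of `xᵢ` and whose slope is nonzero with positive probability, so `Q⁴` is not
integrable and the left-hand side is `0` as well; if it does not occur, it can be replaced by `0`.
-/

open MeasureTheory ProbabilityTheory Filter Real Finset Topology Matrix
open scoped ENNReal

section Algebra

theorem abs_pow_mul_pow_le_add (a b : ℝ) {i j : ℕ} (hij : i + j = 4) :
    |a ^ i * b ^ j| ≤ a ^ 4 + b ^ 4 := by
  have h4 : ∀ c : ℝ, c ^ 4 = |c| ^ 4 := fun c => (Even.pow_abs ⟨2, rfl⟩ c).symm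
  rw [abs_mul, abs_pow, abs_pow, h4 a, h4 b]
  rcases le_total |a| |b| with h | h
  · calc |a| ^ i * |b| ^ j ≤ |b| ^ i * |b| ^ j := by gcongr
      _ = |b| ^ 4 := by rw [← pow_add, hij]
      _ ≤ |a| ^ 4 + |b| ^ 4 := le_add_of_nonneg_left (by positivity)
  · calc |a| ^ i * |b| ^ j ≤ |a| ^ i * |a| ^ j := by gcongr
      _ = |a| ^ 4 := by rw [← pow_add, hij]
      _ ≤ |a| ^ 4 + |b| ^ 4 := le_add_of_nonneg_right (by positivity)

theorem add_pow_four_le (a b : ℝ) :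
    (a + b) ^ 4 ≤ a ^ 4 + 4 * (a ^ 3 * b) + 8 * (a ^ 2 * b ^ 2) + 3 * b ^ 4 := by
  nlinarith [mul_nonneg (sq_nonneg b) (sq_nonneg (a - b))]

variable {ι R : Type*} [Fintype ι] [CommRing R]

theorem sum_offDiag_eq_mul_add [DecidableEq ι] (M : ι → ι → R) (y : ι → R) (i : ι) :
    ∑ u, ∑ v, (if u = v then 0 else M u v * y u * y v) =
      y i * ∑ v ∈ univ.erase i, (M i v + M v i) * y v +
        ∑ u ∈ univ.erase i, ∑ v ∈ univ.erase i, (if u = v then 0 else M u v * y u * y v) := by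
  have hrow : ∀ v ∈ univ.erase i, (if i = v then 0 else M i v * y i * y v) = M i v * y i * y v :=
    fun v hv => if_neg (Ne.symm (ne_of_mem_erase hv))
  have hcol : ∀ u ∈ univ.erase i, (if u = i then 0 else M u i * y u * y i) = M u i * y u * y i :=
    fun u hu => if_neg (ne_of_mem_erase hu)
  simp_rw [← add_sum_erase univ _ (mem_univ i)]
  rw [sum_add_distrib, sum_congr rfl hrow, sum_congr rfl hcol, if_true, zero_add, ← add_assoc,
    mul_sum, ← sum_add_distrib]
  congr 1
  exact sum_congr rfl fun v _ => by ring

variable [LinearOrder ι] [LocallyFiniteOrderBot ι]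

theorem sum_offDiag_eq_sum_mul_sum_Iio (M : ι → ι → R) (y : ι → R) :
    ∑ u, ∑ v, (if u = v then 0 else M u v * y u * y v) =
      ∑ k, y k * ∑ u ∈ Iio k, (M u k + M k u) * y u := by
  have hsplit : ∀ u v, (if u = v then 0 else M u v * y u * y v) =
      (if u < v then M u v * y u * y v else 0) + (if v < u then M u v * y u * y v else 0) := by
    intro u v
    rcases lt_trichotomy u v with h | rfl | h
    · simp [h, h.ne, h.not_gt]
    · simp
    · simp [h, h.ne', h.not_gt]
  simp only [hsplit, sum_add_distrib]
  rw [sum_comm (f := fun u v => if u < v then _ else _)]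
  simp only [← sum_filter, filter_gt_eq_Iio, mul_sum, ← sum_add_distrib]
  exact sum_congr rfl fun k _ => sum_congr rfl fun u _ => by ring

theorem sum_sum_Iio_add_sq_le (M : ι → ι → ℝ) :
    ∑ k, ∑ u ∈ Iio k, (M u k + M k u) ^ 2 ≤ 2 * ∑ u, ∑ v, M u v ^ 2 := by
  have hoff := sum_offDiag_eq_sum_mul_sum_Iio (fun u v => M u v ^ 2) 1
  simp only [Pi.one_apply, mul_one, one_mul] at hoff
  calc ∑ k, ∑ u ∈ Iio k, (M u k + M k u) ^ 2
      ≤ ∑ k, ∑ u ∈ Iio k, 2 * (M u k ^ 2 + M k u ^ 2) := by gcongr; exact add_sq_le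
    _ = 2 * ∑ u, ∑ v, (if u = v then 0 else M u v ^ 2) := by simp only [hoff, mul_sum]
    _ ≤ 2 * ∑ u, ∑ v, M u v ^ 2 := by
        gcongr with u _ v
        split_ifs
        exacts [sq_nonneg _, le_rfl]

end Algebra

theorem Matrix.IsHermitian.trace_sq_eq_sum_sq {n : Type*} [Fintype n] [DecidableEq n]
    {M : Matrix n n ℝ} (hM : M.IsHermitian) : (M ^ 2).trace = ∑ u, ∑ v, M u v ^ 2 := by
  simp only [sq, trace, diag_apply, mul_apply]
  refine sum_congr rfl fun u _ => sum_congr rfl fun v _ => ?_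
  rw [← hM.apply v u]
  simp

namespace MeasureTheory

variable {α : Type*} [MeasurableSpace α] {μ : Measure α}

theorem memLp_four_iff_integrable_pow_four {f : α → ℝ} (hf : AEStronglyMeasurable f μ) :
    MemLp f 4 μ ↔ Integrable (fun a => f a ^ 4) μ := by
  rw [← integrable_norm_rpow_iff hf (by norm_num) (by norm_num)]
  congr! with a
  norm_num [Real.norm_eq_abs, Even.pow_abs (n := 4) ⟨2, rfl⟩]

theorem integrable_pow_mul_pow_of_memLp_four {F D : α → ℝ} (hF : MemLp F 4 μ)
    (hD : MemLp D 4 μ) {i j : ℕ} (hij : i + j = 4) :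
    Integrable (fun a => F a ^ i * D a ^ j) μ := by
  have hF4 := (memLp_four_iff_integrable_pow_four hF.1).1 hF
  have hD4 := (memLp_four_iff_integrable_pow_four hD.1).1 hD
  exact (hF4.add hD4).mono' ((hF.1.pow i).mul (hD.1.pow j))
    (.of_forall fun a => abs_pow_mul_pow_le_add _ _ hij)

theorem integral_sq_mul_sq_le {F D : α → ℝ} (hF : MemLp F 4 μ) (hD : MemLp D 4 μ) :
    ∫ a, F a ^ 2 * D a ^ 2 ∂μ ≤ √(∫ a, F a ^ 4 ∂μ) * √(∫ a, D a ^ 4 ∂μ) := by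
  have hsq : ∀ {G : α → ℝ}, MemLp G 4 μ → MemLp (fun a => G a ^ 2) (ENNReal.ofReal 2) μ := by
    intro G hG
    rw [ENNReal.ofReal_ofNat, memLp_two_iff_integrable_sq (f := fun a => G a ^ 2) (hG.1.pow 2)]
    simpa only [← pow_mul] using (memLp_four_iff_integrable_pow_four hG.1).1 hG
  have h := integral_mul_le_Lp_mul_Lq_of_nonneg Real.HolderConjugate.two_two
    (.of_forall fun a => sq_nonneg (F a)) (.of_forall fun a => sq_nonneg (D a)) (hsq hF) (hsq hD)
  simpa only [← pow_mul, Real.sqrt_eq_rpow, Real.rpow_two] using h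

theorem sqrt_integral_add_pow_four_le {F D : α → ℝ} (hF : MemLp F 4 μ) (hD : MemLp D 4 μ)
    (horth : ∫ a, F a ^ 3 * D a ∂μ = 0) :
    √(∫ a, (F a + D a) ^ 4 ∂μ) ≤ √(∫ a, F a ^ 4 ∂μ) + 4 * √(∫ a, D a ^ 4 ∂μ) := by
  have hF4 := (memLp_four_iff_integrable_pow_four hF.1).1 hF
  have hD4 := (memLp_four_iff_integrable_pow_four hD.1).1 hD
  have hF3D := integrable_pow_mul_pow_of_memLp_four hF hD (i := 3) (j := 1) rfl
  have hF2D2 := integrable_pow_mul_pow_of_memLp_four hF hD (i := 2) (j := 2) rfl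
  have hexpand : ∫ a, (F a + D a) ^ 4 ∂μ ≤
      ∫ a, F a ^ 4 ∂μ + 8 * ∫ a, F a ^ 2 * D a ^ 2 ∂μ + 3 * ∫ a, D a ^ 4 ∂μ := by
    calc ∫ a, (F a + D a) ^ 4 ∂μ
        ≤ ∫ a, F a ^ 4 + 4 * (F a ^ 3 * D a ^ 1) + 8 * (F a ^ 2 * D a ^ 2) + 3 * D a ^ 4 ∂μ :=
          integral_mono_of_nonneg (.of_forall fun a => by positivity)
            (((hF4.add (hF3D.const_mul 4)).add (hF2D2.const_mul 8)).add (hD4.const_mul 3))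
            (.of_forall fun a => by simpa using add_pow_four_le (F a) (D a))
      _ = _ := by
          rw [integral_add (by fun_prop) (by fun_prop), integral_add (by fun_prop) (by fun_prop),
            integral_add hF4 (by fun_prop), integral_const_mul, integral_const_mul,
            integral_const_mul]
          simp [horth]
  have hCS := integral_sq_mul_sq_le hF hD
  have hf := Real.sq_sqrt (integral_nonneg fun a => by positivity : 0 ≤ ∫ a, F a ^ 4 ∂μ)
  have hg := Real.sq_sqrt (integral_nonneg fun a => by positivity : 0 ≤ ∫ a, D a ^ 4 ∂μ)
  rw [Real.sqrt_le_left (by positivity)]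
  nlinarith [Real.sqrt_nonneg (∫ a, F a ^ 4 ∂μ), Real.sqrt_nonneg (∫ a, D a ^ 4 ∂μ)]

theorem sqrt_integral_sum_pow_four_le {ι : Type*} [LinearOrder ι] (d : ι → α → ℝ)
    (hd : ∀ k, MemLp (d k) 4 μ)
    (horth : ∀ k (t : Finset ι), (∀ j ∈ t, j < k) → ∫ a, (∑ j ∈ t, d j a) ^ 3 * d k a ∂μ = 0)
    (s : Finset ι) :
    √(∫ a, (∑ k ∈ s, d k a) ^ 4 ∂μ) ≤ 4 * ∑ k ∈ s, √(∫ a, d k a ^ 4 ∂μ) := by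
  induction s using Finset.induction_on_max with
  | empty => simp
  | insert k s hlt ih =>
    have hk : k ∉ s := fun h => lt_irrefl k (hlt k h)
    simp only [sum_insert hk, add_comm (d k _)]
    calc √(∫ a, (∑ j ∈ s, d j a + d k a) ^ 4 ∂μ)
        ≤ √(∫ a, (∑ j ∈ s, d j a) ^ 4 ∂μ) + 4 * √(∫ a, d k a ^ 4 ∂μ) :=
          sqrt_integral_add_pow_four_le (memLp_finsetSum s fun j _ => hd j) (hd k)
            (horth k s hlt)
      _ ≤ 4 * (√(∫ a, d k a ^ 4 ∂μ) + ∑ j ∈ s, √(∫ a, d j a ^ 4 ∂μ)) := by linarith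

theorem lintegral_enorm_mul_add_pow_four_eq_top {ν : Measure ℝ} [IsFiniteMeasure ν]
    (hν : ¬ MemLp id 4 ν) {l : ℝ} (hl : l ≠ 0) (r : ℝ) :
    ∫⁻ t, ‖(t * l + r) ^ 4‖ₑ ∂ν = ∞ := by
  by_contra hfin
  have hint : Integrable (fun t : ℝ => (t * l + r) ^ 4) ν :=
    ⟨by fun_prop, lt_top_iff_ne_top.2 hfin⟩
  have hmem := (memLp_four_iff_integrable_pow_four (by fun_prop)).2 hint
  have hid : (fun t => (t * l + r - r) * l⁻¹) = id := by
    funext t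
    simp [hl]
  exact hν (hid ▸ (hmem.sub (memLp_const r)).mul_const l⁻¹)

end MeasureTheory

namespace ProbabilityTheory

theorem measurable_iSup_comap_of_mem {Ω ι : Type*} {x : ι → Ω → ℝ} {S : Set ι} {u : ι}
    (hu : u ∈ S) : Measurable[⨆ j ∈ S, MeasurableSpace.comap (x j) inferInstance] (x u) :=
  (comap_measurable (x u)).mono
    (le_iSup₂ (f := fun j (_ : j ∈ S) => MeasurableSpace.comap (x j) inferInstance) u hu) le_rfl

variable {Ω ι : Type*} [MeasurableSpace Ω] {μ : Measure Ω} {x : ι → Ω → ℝ}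

theorem iIndepFun.indepFun_of_measurable_iSup (hx : iIndepFun x μ)
    (hmeas : ∀ i, Measurable (x i)) {S : Set ι} {k : ι} (hk : k ∉ S) {β : Type*}
    [MeasurableSpace β] {G : Ω → β}
    (hG : Measurable[⨆ j ∈ S, MeasurableSpace.comap (x j) inferInstance] G) :
    IndepFun G (x k) μ := by
  rw [IndepFun_iff_Indep]
  have h := indep_iSup_of_disjoint (fun i => (hmeas i).comap_le)
    ((iIndepFun_iff_iIndep _ _ _).1 hx) (S := S) (T := {k}) (Set.disjoint_singleton_right.2 hk)
  exact indep_of_indep_of_le h hG.comap_le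
    (le_iSup₂ (f := fun j (_ : j ∈ ({k} : Set ι)) => MeasurableSpace.comap (x j) inferInstance)
      k rfl)

theorem iIndepFun.integral_mul_eq_zero (hx : iIndepFun x μ) (hmeas : ∀ i, Measurable (x i))
    {S : Set ι} {k : ι} (hk : k ∉ S) (hmean : ∫ ω, x k ω ∂μ = 0) {G : Ω → ℝ}
    (hG : Measurable[⨆ j ∈ S, MeasurableSpace.comap (x j) inferInstance] G) :
    ∫ ω, G ω * x k ω ∂μ = 0 := by
  have hG' : Measurable G := hG.mono (iSup₂_le fun j _ => (hmeas j).comap_le) le_rfl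
  change ∫ ω, (G * x k) ω ∂μ = 0
  rw [(hx.indepFun_of_measurable_iSup hmeas hk hG).integral_mul_eq_mul_integral
    hG'.aestronglyMeasurable (hmeas k).aestronglyMeasurable, hmean, mul_zero]

theorem IndepFun.integral_mul_pow {X Y : Ω → ℝ} (h : IndepFun X Y μ)
    (hX : AEStronglyMeasurable X μ) (hY : AEStronglyMeasurable Y μ) (p : ℕ) :
    ∫ ω, (X ω * Y ω) ^ p ∂μ = (∫ ω, X ω ^ p ∂μ) * ∫ ω, Y ω ^ p ∂μ := by
  have h := (h.comp (continuous_pow p).measurable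
    (continuous_pow p).measurable).integral_mul_eq_mul_integral
    ((continuous_pow p).comp_aestronglyMeasurable hX)
    ((continuous_pow p).comp_aestronglyMeasurable hY)
  simp only [Pi.mul_apply, Function.comp_apply] at h
  simp only [mul_pow, h]

theorem IndepFun.memLp_four_mul {X Y : Ω → ℝ} (h : IndepFun X Y μ) (hX : MemLp X 4 μ)
    (hY : MemLp Y 4 μ) : MemLp (fun ω => X ω * Y ω) 4 μ := by
  refine (memLp_four_iff_integrable_pow_four (f := fun ω => X ω * Y ω) (hX.1.mul hY.1)).2 ?_
  simpa only [Function.comp_def, Pi.mul_def, mul_pow] using (h.comp (continuous_pow 4).measurable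
    (continuous_pow 4).measurable).integrable_mul
    ((memLp_four_iff_integrable_pow_four hX.1).1 hX)
    ((memLp_four_iff_integrable_pow_four hY.1).1 hY)

theorem iIndepFun.measure_sum_mul_ne_zero_ne_zero (hx : iIndepFun x μ)
    (hmeas : ∀ i, Measurable (x i)) (hmean : ∀ i, ∫ ω, x i ω ∂μ = 0)
    (hvar : ∀ i, ∫ ω, x i ω ^ 2 ∂μ = 1) {c : ι → ℝ} {s : Finset ι} {v : ι} (hv : v ∈ s)
    (hc : c v ≠ 0) : μ {ω | ∑ i ∈ s, c i * x i ω ≠ 0} ≠ 0 := by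
  intro h0
  have hL2 : ∀ i, MemLp (x i) 2 μ := fun i =>
    (memLp_two_iff_integrable_sq (hmeas i).aestronglyMeasurable).2 <| by
      by_contra h
      simpa [integral_undef h] using hvar i
  have hsum : variance (∑ i ∈ s, fun ω => c i * x i ω) μ = ∑ i ∈ s, c i ^ 2 := by
    rw [IndepFun.variance_sum (fun i _ => (hL2 i).const_mul _)
      (fun i _ j _ hij => (hx.indepFun hij).comp (measurable_const_mul _) (measurable_const_mul _))]
    refine sum_congr rfl fun i _ => ?_
    rw [variance_const_mul, variance_of_integral_eq_zero (hmeas i).aemeasurable (hmean i), hvar i,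
      mul_one]
  have hzero : variance (∑ i ∈ s, fun ω => c i * x i ω) μ = 0 := by
    rw [← variance_zero μ]
    refine variance_congr (ae_iff.2 ?_)
    simpa only [Finset.sum_apply, Pi.zero_apply] using h0
  rw [hsum, sum_eq_zero_iff_of_nonneg fun i _ => sq_nonneg (c i)] at hzero
  exact hc (pow_eq_zero_iff two_ne_zero |>.1 (hzero v hv))

theorem IndepFun.not_integrable_mul_add_pow_four [IsFiniteMeasure μ] {X : Ω → ℝ}
    {Y : Ω → ℝ × ℝ} (hXY : IndepFun X Y μ) (hX : Measurable X) (hY : Measurable Y)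
    (hX4 : ¬ MemLp X 4 μ) (hY1 : μ {ω | (Y ω).1 ≠ 0} ≠ 0) :
    ¬ Integrable (fun ω => (X ω * (Y ω).1 + (Y ω).2) ^ 4) μ := by
  intro hint
  set g : ℝ × (ℝ × ℝ) → ℝ≥0∞ := fun p => ‖(p.1 * p.2.1 + p.2.2) ^ 4‖ₑ
  have hg : Measurable g := by fun_prop
  have hlaw : ¬ MemLp id 4 (μ.map X) := by
    rwa [memLp_map_measure_iff aestronglyMeasurable_id hX.aemeasurable]
  have hinner : {y : ℝ × ℝ | y.1 ≠ 0} ⊆ {y | ∫⁻ t, g (t, y) ∂(μ.map X) = ∞} :=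
    fun y hy => lintegral_enorm_mul_add_pow_four_eq_top hlaw hy y.2
  have htop : ∫⁻ ω, ‖(X ω * (Y ω).1 + (Y ω).2) ^ 4‖ₑ ∂μ = ∞ :=
    calc ∫⁻ ω, ‖(X ω * (Y ω).1 + (Y ω).2) ^ 4‖ₑ ∂μ
        = ∫⁻ p, g p ∂(μ.map fun ω => (X ω, Y ω)) := (lintegral_map hg (hX.prodMk hY)).symm
      _ = ∫⁻ p, g p ∂((μ.map X).prod (μ.map Y)) := by
          rw [(indepFun_iff_map_prod_eq_prod_map_map hX.aemeasurable hY.aemeasurable).1 hXY]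
      _ = ∫⁻ y, ∫⁻ t, g (t, y) ∂(μ.map X) ∂(μ.map Y) := lintegral_prod_symm' g hg
      _ = ∞ := by
          refine lintegral_eq_top_of_measure_eq_top_ne_zero
            hg.lintegral_prod_left'.aemeasurable fun h => hY1 ?_
          change μ (Y ⁻¹' {y : ℝ × ℝ | y.1 ≠ 0}) = 0
          rw [← Measure.map_apply hY (by measurability)]
          exact measure_mono_null hinner h
  exact hint.2.ne htop

theorem iIndepFun.memLp_four_of_integrable_offDiag_pow_four [IsFiniteMeasure μ] [Fintype ι]
    [DecidableEq ι] (hx : iIndepFun x μ) (hmeas : ∀ i, Measurable (x i))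
    (hmean : ∀ i, ∫ ω, x i ω ∂μ = 0) (hvar : ∀ i, ∫ ω, x i ω ^ 2 ∂μ = 1) (M : ι → ι → ℝ)
    (hQ : Integrable
      (fun ω => (∑ u, ∑ v, if u = v then 0 else M u v * x u ω * x v ω) ^ 4) μ)
    {i v : ι} (hvi : v ≠ i) (hM : M i v + M v i ≠ 0) : MemLp (x i) 4 μ := by
  by_contra hbad
  set E := univ.erase i
  set Y : Ω → ℝ × ℝ := fun ω => (∑ v ∈ E, (M i v + M v i) * x v ω,
    ∑ u ∈ E, ∑ v ∈ E, if u = v then 0 else M u v * x u ω * x v ω)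
  have hxE : ∀ u ∈ E, Measurable[⨆ j ∈ (E : Set ι), MeasurableSpace.comap (x j) inferInstance]
      (x u) := fun u hu => measurable_iSup_comap_of_mem (S := (E : Set ι)) hu
  have hY : Measurable[⨆ j ∈ (E : Set ι), MeasurableSpace.comap (x j) inferInstance] Y := by
    refine (measurable_sum _ fun v hv => (hxE v hv).const_mul _).prodMk
      (measurable_sum _ fun u hu => measurable_sum _ fun v hv => ?_)
    by_cases huv : u = v
    · simpa only [huv, if_true] using measurable_const
    · simp only [huv, if_false]
      exact ((hxE u hu).const_mul _).mul (hxE v hv)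
  have hind : IndepFun (x i) Y μ :=
    (hx.indepFun_of_measurable_iSup hmeas (by simp [E]) hY).symm
  refine hind.not_integrable_mul_add_pow_four (hmeas i)
    (hY.mono (iSup₂_le fun j _ => (hmeas j).comap_le) le_rfl) hbad
    (hx.measure_sum_mul_ne_zero_ne_zero hmeas hmean hvar (mem_erase.2 ⟨hvi, mem_univ v⟩) hM) ?_
  refine hQ.congr (.of_forall fun ω => ?_)
  simp only [sum_offDiag_eq_mul_add M (fun j => x j ω) i, Y, E]

variable [LinearOrder ι]

theorem iIndepFun.sqrt_integral_sum_mul_pow_four_le (hx : iIndepFun x μ)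
    (hmeas : ∀ i, Measurable (x i)) (hmean : ∀ i, ∫ ω, x i ω ∂μ = 0)
    (hL4 : ∀ i, MemLp (x i) 4 μ) {ν : ℝ} (h4 : ∀ i, ∫ ω, x i ω ^ 4 ∂μ ≤ ν)
    (c : ι → ℝ) (s : Finset ι) :
    √(∫ ω, (∑ i ∈ s, c i * x i ω) ^ 4 ∂μ) ≤ 4 * √ν * ∑ i ∈ s, c i ^ 2 := by
  have horth : ∀ k (t : Finset ι), (∀ j ∈ t, j < k) →
      ∫ ω, (∑ j ∈ t, c j * x j ω) ^ 3 * (c k * x k ω) ∂μ = 0 := by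
    intro k t ht
    have hG : Measurable[⨆ j ∈ (t : Set ι), MeasurableSpace.comap (x j) inferInstance]
        fun ω => c k * (∑ j ∈ t, c j * x j ω) ^ 3 :=
      ((measurable_sum t fun j hj =>
        (measurable_iSup_comap_of_mem (S := (t : Set ι)) hj).const_mul _).pow_const 3).const_mul _
    simpa only [mul_assoc, mul_comm, mul_left_comm] using
      hx.integral_mul_eq_zero hmeas (fun hk => lt_irrefl k (ht k hk)) (hmean k) hG
  have hterm : ∀ i, √(∫ ω, (c i * x i ω) ^ 4 ∂μ) ≤ √ν * c i ^ 2 := by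
    intro i
    simp only [mul_pow, integral_const_mul]
    rw [Real.sqrt_mul (by positivity), show c i ^ 4 = (c i ^ 2) ^ 2 by ring,
      Real.sqrt_sq (by positivity), mul_comm]
    gcongr
    exact h4 i
  calc √(∫ ω, (∑ i ∈ s, c i * x i ω) ^ 4 ∂μ)
      ≤ 4 * ∑ i ∈ s, √(∫ ω, (c i * x i ω) ^ 4 ∂μ) :=
        sqrt_integral_sum_pow_four_le (fun i ω => c i * x i ω) (fun i => (hL4 i).const_mul _)
          horth s
    _ ≤ 4 * ∑ i ∈ s, √ν * c i ^ 2 := by gcongr with i; exact hterm i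
    _ = 4 * √ν * ∑ i ∈ s, c i ^ 2 := by rw [← mul_sum, mul_assoc]

variable [LocallyFiniteOrderBot ι]

theorem iIndepFun.sqrt_integral_sum_mul_sum_Iio_pow_four_le (hx : iIndepFun x μ)
    (hmeas : ∀ i, Measurable (x i)) (hmean : ∀ i, ∫ ω, x i ω ∂μ = 0)
    (hL4 : ∀ i, MemLp (x i) 4 μ) {ν : ℝ} (h4 : ∀ i, ∫ ω, x i ω ^ 4 ∂μ ≤ ν)
    (b : ι → ι → ℝ) (s : Finset ι) :
    √(∫ ω, (∑ k ∈ s, x k ω * ∑ u ∈ Iio k, b u k * x u ω) ^ 4 ∂μ) ≤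
      16 * ν * ∑ k ∈ s, ∑ u ∈ Iio k, b u k ^ 2 := by
  set L : ι → Ω → ℝ := fun k ω => ∑ u ∈ Iio k, b u k * x u ω
  have hLmeas : ∀ {k j}, j ≤ k →
      Measurable[⨆ i ∈ Set.Iio k, MeasurableSpace.comap (x i) inferInstance] (L j) := by
    intro k j hjk
    refine measurable_sum _ fun u hu => ?_
    exact (measurable_iSup_comap_of_mem (x := x) (S := Set.Iio k)
      (Set.mem_Iio.2 ((mem_Iio.1 hu).trans_le hjk))).const_mul _
  have hindep : ∀ k, IndepFun (x k) (L k) μ := fun k =>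
    (hx.indepFun_of_measurable_iSup hmeas Set.self_notMem_Iio (hLmeas le_rfl)).symm
  have hLL4 : ∀ k, MemLp (L k) 4 μ := fun k =>
    memLp_finsetSum _ fun u _ => (hL4 u).const_mul _
  have horth : ∀ k (t : Finset ι), (∀ j ∈ t, j < k) →
      ∫ ω, (∑ j ∈ t, x j ω * L j ω) ^ 3 * (x k ω * L k ω) ∂μ = 0 := by
    intro k t ht
    have hG : Measurable[⨆ i ∈ Set.Iio k, MeasurableSpace.comap (x i) inferInstance]
        fun ω => (∑ j ∈ t, x j ω * L j ω) ^ 3 * L k ω := by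
      refine ((measurable_sum t fun j hj => ?_).pow_const 3).mul (hLmeas le_rfl)
      exact (measurable_iSup_comap_of_mem (x := x) (S := Set.Iio k) (ht j hj)).mul
        (hLmeas (ht j hj).le)
    simpa only [mul_assoc, mul_comm, mul_left_comm] using
      hx.integral_mul_eq_zero hmeas Set.self_notMem_Iio (hmean k) hG
  have hterm : ∀ k, √(∫ ω, (x k ω * L k ω) ^ 4 ∂μ) ≤ 4 * ν * ∑ u ∈ Iio k, b u k ^ 2 := by
    intro k
    have hν : 0 ≤ ν := (integral_nonneg fun ω => by positivity).trans (h4 k)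
    rw [(hindep k).integral_mul_pow (hmeas k).aestronglyMeasurable (hLL4 k).1,
      Real.sqrt_mul (integral_nonneg fun ω => by positivity)]
    calc √(∫ ω, x k ω ^ 4 ∂μ) * √(∫ ω, L k ω ^ 4 ∂μ)
        ≤ √ν * (4 * √ν * ∑ u ∈ Iio k, b u k ^ 2) :=
          mul_le_mul (Real.sqrt_le_sqrt (h4 k))
            (hx.sqrt_integral_sum_mul_pow_four_le hmeas hmean hL4 h4 _ _)
            (Real.sqrt_nonneg _) (Real.sqrt_nonneg _)
      _ = 4 * ν * ∑ u ∈ Iio k, b u k ^ 2 := by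
          rw [mul_left_comm, ← mul_assoc, mul_assoc 4, Real.mul_self_sqrt hν]
  calc √(∫ ω, (∑ k ∈ s, x k ω * L k ω) ^ 4 ∂μ)
      ≤ 4 * ∑ k ∈ s, √(∫ ω, (x k ω * L k ω) ^ 4 ∂μ) :=
        sqrt_integral_sum_pow_four_le (fun k ω => x k ω * L k ω)
          (fun k => (hindep k).memLp_four_mul (hL4 k) (hLL4 k)) horth s
    _ ≤ 4 * ∑ k ∈ s, 4 * ν * ∑ u ∈ Iio k, b u k ^ 2 := by gcongr with k; exact hterm k
    _ = 16 * ν * ∑ k ∈ s, ∑ u ∈ Iio k, b u k ^ 2 := by rw [← mul_sum]; ring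

open Classical in
noncomputable def zeroOfNotMemLpFour (x : ι → Ω → ℝ) (μ : Measure Ω) (i : ι) : Ω → ℝ :=
  if MemLp (x i) 4 μ then x i else 0

theorem iIndepFun.sqrt_integral_sum_mul_sum_Iio_zeroOfNotMemLpFour_pow_four_le
    (hx : iIndepFun x μ) (hmeas : ∀ i, Measurable (x i)) (hmean : ∀ i, ∫ ω, x i ω ∂μ = 0)
    {ν : ℝ} (h4 : ∀ i, ∫ ω, |x i ω| ^ 4 ∂μ ≤ ν) (b : ι → ι → ℝ) (s : Finset ι) :
    √(∫ ω, (∑ k ∈ s, zeroOfNotMemLpFour x μ k ω *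
        ∑ u ∈ Iio k, b u k * zeroOfNotMemLpFour x μ u ω) ^ 4 ∂μ) ≤
      16 * ν * ∑ k ∈ s, ∑ u ∈ Iio k, b u k ^ 2 := by
  classical
  set g : ι → ℝ → ℝ := fun i => if MemLp (x i) 4 μ then id else 0
  have hy : zeroOfNotMemLpFour x μ = fun i => g i ∘ x i := funext fun i => by
    by_cases hi : MemLp (x i) 4 μ <;> simp [zeroOfNotMemLpFour, g, hi]
  refine iIndepFun.sqrt_integral_sum_mul_sum_Iio_pow_four_le ?_ (fun i => ?_) (fun i => ?_)
    (fun i => ?_) (fun i => ?_) b s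
  · rw [hy]
    exact hx.comp g fun i => by
      by_cases hi : MemLp (x i) 4 μ <;> simp only [g, hi, if_true, if_false] <;> fun_prop
  · simp only [hy]
    by_cases hi : MemLp (x i) 4 μ <;> simp only [g, hi, if_true, if_false]
    exacts [hmeas i, measurable_const.comp (hmeas i)]
  · by_cases hi : MemLp (x i) 4 μ <;> simp [zeroOfNotMemLpFour, hi, hmean i]
  · by_cases hi : MemLp (x i) 4 μ <;> simp [zeroOfNotMemLpFour, hi]
  · have hν : 0 ≤ ν := (integral_nonneg fun ω => by positivity).trans (h4 i)
    by_cases hi : MemLp (x i) 4 μ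
    · simpa [zeroOfNotMemLpFour, hi, Even.pow_abs (n := 4) ⟨2, rfl⟩] using h4 i
    · simpa [zeroOfNotMemLpFour, hi] using hν

theorem iIndepFun.sqrt_integral_offDiag_pow_four_le [IsFiniteMeasure μ] [Fintype ι]
    (hx : iIndepFun x μ) (hmeas : ∀ i, Measurable (x i)) (hmean : ∀ i, ∫ ω, x i ω ∂μ = 0)
    (hvar : ∀ i, ∫ ω, x i ω ^ 2 ∂μ = 1) {ν : ℝ} (h4 : ∀ i, ∫ ω, |x i ω| ^ 4 ∂μ ≤ ν)
    (M : ι → ι → ℝ)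
    (hQ : Integrable
      (fun ω => (∑ u, ∑ v, if u = v then 0 else M u v * x u ω * x v ω) ^ 4) μ) :
    √(∫ ω, (∑ u, ∑ v, if u = v then 0 else M u v * x u ω * x v ω) ^ 4 ∂μ) ≤
      16 * ν * ∑ k, ∑ u ∈ Iio k, (M u k + M k u) ^ 2 := by
  have hx' : ∀ {u k}, k ≠ u → M u k + M k u ≠ 0 → zeroOfNotMemLpFour x μ u = x u :=
    fun hku hM => by
      simp [zeroOfNotMemLpFour,
        hx.memLp_four_of_integrable_offDiag_pow_four hmeas hmean hvar M hQ hku hM]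
  have hQ' : ∀ ω, (∑ u, ∑ v, if u = v then 0 else M u v * x u ω * x v ω) =
      ∑ k, zeroOfNotMemLpFour x μ k ω *
        ∑ u ∈ Iio k, (M u k + M k u) * zeroOfNotMemLpFour x μ u ω := by
    intro ω
    rw [sum_offDiag_eq_sum_mul_sum_Iio M (fun j => x j ω)]
    refine sum_congr rfl fun k _ => ?_
    rw [mul_sum, mul_sum]
    refine sum_congr rfl fun u hu => ?_
    have hku : k ≠ u := (mem_Iio.1 hu).ne'
    by_cases hM : M u k + M k u = 0
    · simp [hM]
    · rw [hx' hku hM, hx' hku.symm (by rwa [add_comm])]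
  simp only [hQ']
  exact hx.sqrt_integral_sum_mul_sum_Iio_zeroOfNotMemLpFour_pow_four_le hmeas hmean h4 _ univ

end ProbabilityTheory

/-- **Fourth-moment bound for the off-diagonal quadratic form.**
There is an absolute constant `C > 0` such that for independent real random variables
`x_1, …, x_n` with mean `0`, variance `1` and `E|x_i|^4 ≤ ν₄`, and any deterministic
nonnegative definite `n × n` real matrix `M`,
`E|Σ_{u≠v} m_uv x_u x_v|⁴ ≤ C ν₄² (tr (M²))²`. -/
theorem off_diagonal_quadratic_form_fourth_moment_bound :
    ∃ C : ℝ, 0 < C ∧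
      ∀ (n : ℕ) (Ω : Type) (_ : MeasureSpace Ω) (_ : IsProbabilityMeasure (ℙ : Measure Ω))
        (x : Fin n → Ω → ℝ) (ν₄ : ℝ),
        (∀ i, Measurable (x i)) →
        iIndepFun x ℙ →
        (∀ i, ∫ ω, x i ω ∂ℙ = 0) →
        (∀ i, ∫ ω, (x i ω) ^ 2 ∂ℙ = 1) →
        (∀ i, ∫ ω, |x i ω| ^ 4 ∂ℙ ≤ ν₄) →
        ∀ M : Matrix (Fin n) (Fin n) ℝ, M.PosSemidef →
          ∫ ω, |∑ u, ∑ v, if u = v then 0 else M u v * x u ω * x v ω| ^ 4 ∂ℙ ≤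
            C * ν₄ ^ 2 * Matrix.trace (M ^ 2) ^ 2 := by
  refine ⟨1024, by norm_num, fun n Ω _ _ x ν₄ hmeas hx hmean hvar h4 M hM => ?_⟩
  simp only [Even.pow_abs (n := 4) ⟨2, rfl⟩]
  by_cases hQ : Integrable
      (fun ω => (∑ u, ∑ v, if u = v then 0 else M u v * x u ω * x v ω) ^ 4) ℙ
  swap
  · rw [integral_undef hQ]
    positivity
  have hsqrt := hx.sqrt_integral_offDiag_pow_four_le hmeas hmean hvar h4 M hQ
  have hS := sum_sum_Iio_add_sq_le M
  rw [hM.isHermitian.trace_sq_eq_sum_sq]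
  calc ∫ ω, (∑ u, ∑ v, if u = v then 0 else M u v * x u ω * x v ω) ^ 4 ∂ℙ
      = √(∫ ω, (∑ u, ∑ v, if u = v then 0 else M u v * x u ω * x v ω) ^ 4 ∂ℙ) ^ 2 :=
        (Real.sq_sqrt (integral_nonneg fun ω => by positivity)).symm
    _ ≤ (16 * ν₄ * ∑ k, ∑ u ∈ Iio k, (M u k + M k u) ^ 2) ^ 2 :=
        pow_le_pow_left₀ (Real.sqrt_nonneg _) hsqrt 2
    _ = 256 * ν₄ ^ 2 * (∑ k, ∑ u ∈ Iio k, (M u k + M k u) ^ 2) ^ 2 := by ring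
    _ ≤ 256 * ν₄ ^ 2 * (2 * ∑ u, ∑ v, M u v ^ 2) ^ 2 := by gcongr
    _ = 1024 * ν₄ ^ 2 * (∑ u, ∑ v, M u v ^ 2) ^ 2 := by ring
end

section
/- (Deterministic Taylor remainder bound.) For every constant a > 0 and every δ with 0 ≤ δ ≤ 1 there is a constant C = C(a, δ) > 0 such that for all integers n ≥ 3 and all real numbers u, v with x := u + v ≥ −1 + (log n)^{−a/2}, one has |log(1 + x) − (x − x^2/2)| ≤ C·(u^2 + |v|^{2+δ})·log log n. -/
/-!
For `x ≥ -1/2` the remainder `log (1 + x) - (x - x²/2)` is `O(min (x², |x|³))`, and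
`min (x², |x|³) ≤ |x|^(2+δ)`; splitting according to whether `|u|` or `|v|` dominates
`|u + v|` bounds this by `8 (u² + |v|^(2+δ))`. For `x < -1/2` the remainder is at most
`1/2 - log (1 + x) ≤ 1/2 + (a/2) log log n`, while `u² + |v|^(2+δ) ≥ 1/64`.
-/

open Real

lemma abs_log_one_add_sub_le_of_abs_le_half {x : ℝ} (hx : |x| ≤ 1 / 2) :
    |log (1 + x) - (x - x ^ 2 / 2)| ≤ 2 * |x| ^ 3 := by
  have hseries := abs_log_sub_add_sum_range_le (x := -x) (by rw [abs_neg]; linarith) 2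
  rw [abs_neg, sub_neg_eq_add] at hseries
  calc |log (1 + x) - (x - x ^ 2 / 2)|
      = |(∑ i ∈ Finset.range 2, (-x) ^ (i + 1) / (i + 1)) + log (1 + x)| := by
        simp only [Finset.sum_range_succ, Finset.sum_range_zero]; congr 1; push_cast; ring
    _ ≤ |x| ^ 3 / (1 - |x|) := hseries
    _ ≤ 2 * |x| ^ 3 := by
        rw [div_le_iff₀ (by linarith)]
        nlinarith [mul_nonneg (pow_nonneg (abs_nonneg x) 3) (by linarith : (0 : ℝ) ≤ 1 - 2 * |x|)]

lemma abs_log_one_add_sub_le_of_half_le {x : ℝ} (hx : 1 / 2 ≤ x) :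
    |log (1 + x) - (x - x ^ 2 / 2)| ≤ 2 * x ^ 2 := by
  have hlog_le : log (1 + x) ≤ x := by linarith [log_le_sub_one_of_pos (by linarith : 0 < 1 + x)]
  have hlog_nonneg : 0 ≤ log (1 + x) := log_nonneg (by linarith)
  rw [abs_le]
  constructor <;> nlinarith

lemma abs_log_one_add_sub_le_min {x : ℝ} (hx : -(1 / 2) ≤ x) :
    |log (1 + x) - (x - x ^ 2 / 2)| ≤ 4 * min (x ^ 2) (|x| ^ 3) := by
  rcases le_or_gt x (1 / 2) with hsmall | hlarge
  · have habs : |x| ≤ 1 / 2 := abs_le.2 ⟨hx, hsmall⟩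
    have hcube : |x| ^ 3 ≤ x ^ 2 / 2 := by
      rw [← sq_abs x]; nlinarith [sq_nonneg |x|]
    calc _ ≤ 2 * |x| ^ 3 := abs_log_one_add_sub_le_of_abs_le_half habs
      _ ≤ 4 * min (x ^ 2) (|x| ^ 3) := by
        rw [min_eq_right (by linarith [sq_nonneg x])]; nlinarith [pow_nonneg (abs_nonneg x) 3]
  · rw [abs_of_pos (by linarith : 0 < x)]
    calc _ ≤ 2 * x ^ 2 := abs_log_one_add_sub_le_of_half_le hlarge.le
      _ ≤ 4 * min (x ^ 2) (x ^ 3) := by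
        rw [mul_min_of_nonneg _ _ (by norm_num)]
        exact le_min (by nlinarith [sq_nonneg x]) (by nlinarith [sq_nonneg x])

lemma abs_log_one_add_sub_le_neg_log {x : ℝ} (hx : 0 < 1 + x) (hx0 : x ≤ 0) :
    |log (1 + x) - (x - x ^ 2 / 2)| ≤ 1 / 2 - log (1 + x) := by
  have hlog_le : log (1 + x) ≤ x := by linarith [log_le_sub_one_of_pos hx]
  rw [abs_le]
  constructor <;> nlinarith

lemma min_sq_pow_three_le_rpow {t δ : ℝ} (ht : 0 ≤ t) (hδ0 : 0 ≤ δ) (hδ1 : δ ≤ 1) :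
    min (t ^ 2) (t ^ 3) ≤ t ^ (2 + δ) := by
  rcases le_total t 1 with ht1 | ht1
  · refine (min_le_right _ _).trans ?_
    rw [← rpow_natCast]
    exact rpow_le_rpow_of_exponent_ge' ht ht1 (by linarith) (by push_cast; linarith)
  · refine (min_le_left _ _).trans ?_
    rw [← rpow_natCast]
    exact rpow_le_rpow_of_exponent_le ht1 (by push_cast; linarith)

lemma min_sq_pow_three_add_le {δ : ℝ} (hδ0 : 0 ≤ δ) (hδ1 : δ ≤ 1) (u v : ℝ) :
    min ((u + v) ^ 2) (|u + v| ^ 3) ≤ 8 * (u ^ 2 + |v| ^ (2 + δ)) := by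
  have hv : 0 ≤ |v| ^ (2 + δ) := by positivity
  rcases le_total |v| |u| with hvu | huv
  · have hsq : (u + v) ^ 2 ≤ 4 * u ^ 2 := by
      rw [← sq_abs (u + v), ← sq_abs u]
      nlinarith [abs_add_le u v, abs_nonneg (u + v)]
    linarith [min_le_left ((u + v) ^ 2) (|u + v| ^ 3), sq_nonneg u]
  · have hsum : |u + v| ≤ 2 * |v| := by linarith [abs_add_le u v]
    calc min ((u + v) ^ 2) (|u + v| ^ 3) = min (|u + v| ^ 2) (|u + v| ^ 3) := by rw [sq_abs]
      _ ≤ |u + v| ^ (2 + δ) := min_sq_pow_three_le_rpow (abs_nonneg _) hδ0 hδ1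
      _ ≤ (2 * |v|) ^ (2 + δ) := rpow_le_rpow (abs_nonneg _) hsum (by linarith)
      _ = 2 ^ (2 + δ) * |v| ^ (2 + δ) := mul_rpow (by norm_num) (abs_nonneg v)
      _ ≤ 2 ^ (3 : ℝ) * |v| ^ (2 + δ) := by
        gcongr
        · norm_num
        · linarith
      _ ≤ 8 * (u ^ 2 + |v| ^ (2 + δ)) := by norm_num; nlinarith [sq_nonneg u]

lemma abs_log_one_add_sub_le_of_neg_one_add_le {x ε : ℝ} (hε : 0 < ε) (hε1 : ε ≤ 1)
    (hx : -1 + ε ≤ x) :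
    |log (1 + x) - (x - x ^ 2 / 2)| ≤ 8 * min (x ^ 2) (|x| ^ 3) * (1 / 2 - log ε) := by
  have hlog_ε : log ε ≤ 0 := log_nonpos hε.le hε1
  have hmin_nonneg : 0 ≤ min (x ^ 2) (|x| ^ 3) := le_min (sq_nonneg x) (by positivity)
  rcases le_or_gt (-(1 / 2)) x with hx_half | hx_half
  · calc _ ≤ 4 * min (x ^ 2) (|x| ^ 3) := abs_log_one_add_sub_le_min hx_half
      _ ≤ 8 * min (x ^ 2) (|x| ^ 3) * (1 / 2 - log ε) := by nlinarith
  · have habs : 1 / 2 ≤ |x| := by rw [abs_of_neg (by linarith)]; linarith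
    have hmin : 1 / 8 ≤ min (x ^ 2) (|x| ^ 3) := by
      rw [← sq_abs x]
      exact le_min (by nlinarith) (by nlinarith [sq_nonneg |x|])
    calc _ ≤ 1 / 2 - log (1 + x) := abs_log_one_add_sub_le_neg_log (by linarith) (by linarith)
      _ ≤ 1 / 2 - log ε := by linarith [log_le_log hε (by linarith : ε ≤ 1 + x)]
      _ ≤ 8 * min (x ^ 2) (|x| ^ 3) * (1 / 2 - log ε) := by nlinarith

/-- **Deterministic Taylor remainder bound.**
For every `a > 0` and `0 ≤ δ ≤ 1` there is `C = C(a, δ) > 0` such that for all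
integers `n ≥ 3` and all reals `u, v` with `x := u + v ≥ -1 + (log n)^{-a/2}`,
`|log(1 + x) - (x - x²/2)| ≤ C (u² + |v|^{2+δ}) log log n`. -/
theorem taylor_remainder_bound (a : ℝ) (ha : 0 < a) (δ : ℝ) (hδ0 : 0 ≤ δ) (hδ1 : δ ≤ 1) :
    ∃ C : ℝ, 0 < C ∧
      ∀ n : ℕ, 3 ≤ n → ∀ u v : ℝ,
        -1 + Real.log n ^ (-(a / 2)) ≤ u + v →
        |Real.log (1 + (u + v)) - ((u + v) - (u + v) ^ 2 / 2)| ≤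
          C * (u ^ 2 + |v| ^ (2 + δ)) * Real.log (Real.log n) := by
  have hlog3 : 1 < log 3 := by
    rw [lt_log_iff_exp_lt (by norm_num)]
    exact exp_one_lt_d9.trans (by norm_num)
  have hc₀ : 0 < log (log 3) := log_pos hlog3
  refine ⟨32 * (a + 1 / log (log 3)), by positivity, fun n hn u v hx => ?_⟩
  have hlog_n : log 3 ≤ log n := log_le_log (by norm_num) (by exact_mod_cast hn)
  have hε : 0 < log n ^ (-(a / 2)) := rpow_pos_of_pos (by linarith) _
  have hL : log (log 3) ≤ log (log n) := log_le_log (by linarith) hlog_n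
  have hε1 : log n ^ (-(a / 2)) ≤ 1 := rpow_le_one_of_one_le_of_nonpos (by linarith) (by linarith)
  have hlog_ε : log (log n ^ (-(a / 2))) = -(a / 2) * log (log n) := log_rpow (by linarith) _
  have hS : 0 ≤ u ^ 2 + |v| ^ (2 + δ) := by positivity
  have hL_div : 1 ≤ log (log n) / log (log 3) := (one_le_div hc₀).2 hL
  calc _ ≤ 8 * min ((u + v) ^ 2) (|u + v| ^ 3) * (1 / 2 - log (log n ^ (-(a / 2)))) :=
        abs_log_one_add_sub_le_of_neg_one_add_le hε hε1 hx
    _ ≤ 8 * (8 * (u ^ 2 + |v| ^ (2 + δ))) * (1 / 2 - log (log n ^ (-(a / 2)))) := by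
        gcongr
        · linarith [log_nonpos hε.le hε1]
        · exact min_sq_pow_three_add_le hδ0 hδ1 u v
    _ = 32 * (u ^ 2 + |v| ^ (2 + δ)) * (1 + a * log (log n)) := by rw [hlog_ε]; ring
    _ ≤ 32 * (a + 1 / log (log 3)) * (u ^ 2 + |v| ^ (2 + δ)) * log (log n) := by
        rw [div_eq_mul_one_div] at hL_div
        nlinarith [mul_le_mul_of_nonneg_left hL_div hS]
end

section
/- (Cofactor–Cauchy–Binet identity.) Let A be an (n−1)×n real matrix, let b_k ∈ ℝ^{n−1} denote its k-th column, and let A_k denote the (n−1)×(n−1) matrix obtained from A by deleting its k-th column; assume each A_k is invertible. Let α_k = (−1)^{n+k}·det A_k (the cofactor) and Δ^2 = Σ_{k=1}^n α_k^2. Then Δ^2 = det(A·A^T), and for each k, (α_k/Δ)^2 = ( 1 + b_k^T·(A_k·A_k^T)^{−1}·b_k )^{−1}. -/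
open Matrix

/-- The cofactor `α_k = (-1)^{(n+1)+(k+1)} det A_k` corresponding to deleting the `k`-th
column of the `n × (n+1)` matrix `A` (in the paper's notation, `A` is an
`(n-1) × n` matrix and these are the cofactors of an appended last row). -/
noncomputable def cofac {n : ℕ} (A : Matrix (Fin n) (Fin (n + 1)) ℝ) (k : Fin (n + 1)) : ℝ :=
  (-1 : ℝ) ^ (n + (k : ℕ)) * (A.submatrix id (Fin.succAbove k)).det

/-!
Appending the cofactor vector `α` to `A` as a last row gives a square matrix `B` with
`det B = Σ α_k²` (Laplace expansion along that row), while `A α = 0` because each entry of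
`A α` is the determinant of a matrix with a repeated row. Hence `B Bᵀ` is block diagonal with
blocks `A Aᵀ` and `Σ α_k²`, and `det (B Bᵀ) = (det B)²` yields `Δ² = det (A Aᵀ)` as soon as
`Δ ≠ 0`. For the second identity, `A Aᵀ = A_k A_kᵀ + b_k b_kᵀ` and `det (A_k A_kᵀ) = α_k²`, so
the matrix determinant lemma gives `Δ² = α_k² (1 + b_kᵀ (A_k A_kᵀ)⁻¹ b_k)`.
-/

namespace Matrix

section AppendRow

variable {R m : Type*} {n : ℕ}

def appendRow (A : Matrix (Fin n) m R) (x : m → R) : Matrix (Fin (n + 1)) m R :=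
  of (Fin.snoc (α := fun _ => m → R) A x)

variable (A : Matrix (Fin n) m R) (x : m → R)

@[simp]
theorem appendRow_apply_castSucc (i : Fin n) (j : m) : A.appendRow x i.castSucc j = A i j :=
  congrFun (Fin.snoc_castSucc (α := fun _ => m → R) ..) j

@[simp]
theorem appendRow_apply_last (j : m) : A.appendRow x (Fin.last n) j = x j :=
  congrFun (Fin.snoc_last (α := fun _ => m → R) ..) j

end AppendRow

theorem mul_transpose_eq_submatrix_succAbove_add_vecMulVec {S m : Type*}
    [NonUnitalNonAssocSemiring S] {n : ℕ} (A : Matrix m (Fin (n + 1)) S) (k : Fin (n + 1)) :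
    A * Aᵀ = A.submatrix id k.succAbove * (A.submatrix id k.succAbove)ᵀ
      + vecMulVec (fun i => A i k) (fun i => A i k) := by
  ext i j
  simp only [mul_apply, transpose_apply, add_apply, submatrix_apply, id_eq, vecMulVec_apply]
  rw [Fin.sum_univ_succAbove _ k, add_comm]

section CommRing

variable {R : Type*} [CommRing R]

theorem det_eq_mul_det_submatrix_castSucc_of_last_row {n : ℕ}
    (M : Matrix (Fin (n + 1)) (Fin (n + 1)) R) (h : ∀ j : Fin n, M (Fin.last n) j.castSucc = 0) :
    M.det = M (Fin.last n) (Fin.last n) * (M.submatrix Fin.castSucc Fin.castSucc).det := by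
  rw [det_succ_row _ (Fin.last n), Fin.sum_univ_castSucc]
  simp only [h, mul_zero, zero_mul, Finset.sum_const_zero, zero_add, Fin.succAbove_last,
    Fin.val_last, ← two_mul, pow_mul, neg_one_sq, one_pow, one_mul]

theorem det_add_vecMulVec {m : Type*} [Fintype m] [DecidableEq m] {M : Matrix m m R}
    (hM : IsUnit M.det) (u v : m → R) :
    (M + vecMulVec u v).det = M.det * (1 + v ⬝ᵥ M⁻¹ *ᵥ u) := by
  rw [vecMulVec_eq (ι := Unit), det_add_replicateCol_mul_replicateRow hM,
    det_unique (1 + _ : Matrix Unit Unit R), dotProduct_mulVec]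
  simp [replicateRow, replicateCol, dotProduct, vecMul, mul_apply]

end CommRing

end Matrix

section Cofactor

variable {n : ℕ} (A : Matrix (Fin n) (Fin (n + 1)) ℝ)

theorem det_appendRow_eq_dotProduct_cofac (x : Fin (n + 1) → ℝ) :
    (A.appendRow x).det = x ⬝ᵥ cofac A := by
  rw [det_succ_row _ (Fin.last n), dotProduct]
  refine Finset.sum_congr rfl fun j _ => ?_
  have hminor : (A.appendRow x).submatrix (Fin.last n).succAbove j.succAbove
      = A.submatrix id j.succAbove := by
    ext i l
    simp
  rw [hminor, appendRow_apply_last, cofac, Fin.val_last]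
  ring

theorem mulVec_cofac : A *ᵥ cofac A = 0 := by
  ext i
  rw [mulVec, ← det_appendRow_eq_dotProduct_cofac, Pi.zero_apply]
  refine det_zero_of_row_eq (Fin.castSucc_lt_last i).ne ?_
  ext j
  simp

theorem det_appendRow_cofac_mul_transpose :
    (A.appendRow (cofac A) * (A.appendRow (cofac A))ᵀ).det
      = (∑ k, cofac A k ^ 2) * (A * Aᵀ).det := by
  have hcorner : (A.appendRow (cofac A) * (A.appendRow (cofac A))ᵀ) (Fin.last n) (Fin.last n)
      = ∑ k, cofac A k ^ 2 := by
    simp [mul_apply, sq]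
  have hblock : (A.appendRow (cofac A) * (A.appendRow (cofac A))ᵀ).submatrix
      Fin.castSucc Fin.castSucc = A * Aᵀ := by
    ext i j
    simp [mul_apply]
  rw [det_eq_mul_det_submatrix_castSucc_of_last_row, hcorner, hblock]
  intro j
  simpa [mul_apply, mulVec, dotProduct, mul_comm] using congrFun (mulVec_cofac A) j

theorem sum_cofac_sq_eq_det_mul_transpose (hD : ∑ k, cofac A k ^ 2 ≠ 0) :
    ∑ k, cofac A k ^ 2 = (A * Aᵀ).det := by
  have hdet : (A.appendRow (cofac A)).det = ∑ k, cofac A k ^ 2 := by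
    simp [det_appendRow_eq_dotProduct_cofac, dotProduct, sq]
  refine mul_left_cancel₀ hD ?_
  rw [← det_appendRow_cofac_mul_transpose, det_mul, det_transpose, hdet]

theorem det_submatrix_succAbove_mul_transpose (k : Fin (n + 1)) :
    (A.submatrix id k.succAbove * (A.submatrix id k.succAbove)ᵀ).det = cofac A k ^ 2 := by
  rw [det_mul, det_transpose, cofac, mul_pow, ← pow_mul, pow_mul', neg_one_sq, one_pow, one_mul,
    sq]

theorem det_mul_transpose_eq_cofac_sq_mul (k : Fin (n + 1))
    (hk : IsUnit (A.submatrix id k.succAbove).det) :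
    (A * Aᵀ).det = cofac A k ^ 2 *
      (1 + (fun i => A i k) ⬝ᵥ
        (A.submatrix id k.succAbove * (A.submatrix id k.succAbove)ᵀ)⁻¹ *ᵥ fun i => A i k) := by
  have hunit : IsUnit (A.submatrix id k.succAbove * (A.submatrix id k.succAbove)ᵀ).det := by
    rw [det_mul, det_transpose]
    exact hk.mul hk
  rw [mul_transpose_eq_submatrix_succAbove_add_vecMulVec A k, det_add_vecMulVec hunit,
    det_submatrix_succAbove_mul_transpose]

end Cofactor

/-- **Cofactor–Cauchy–Binet identity.**
Let `A` be an `(n-1) × n` real matrix (here: `n × (n+1)`), `b_k` its `k`-th column and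
`A_k` the square matrix obtained by deleting the `k`-th column; assume each `A_k` is
invertible.  With `α_k = (-1)^{n+k} det A_k` and `Δ² = Σ_k α_k²`, one has
`Δ² = det (A Aᵀ)` and `(α_k/Δ)² = (1 + b_kᵀ (A_k A_kᵀ)⁻¹ b_k)⁻¹` for each `k`. -/
theorem cofactor_cauchy_binet (n : ℕ) (A : Matrix (Fin n) (Fin (n + 1)) ℝ)
    (hinv : ∀ k : Fin (n + 1), IsUnit (A.submatrix id (Fin.succAbove k)).det) :
    (∑ k, cofac A k ^ 2) = (A * Aᵀ).det ∧
    ∀ k : Fin (n + 1),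
      (cofac A k / Real.sqrt (∑ j, cofac A j ^ 2)) ^ 2 =
        (1 + (fun i => A i k) ⬝ᵥ
          ((A.submatrix id (Fin.succAbove k) * (A.submatrix id (Fin.succAbove k))ᵀ)⁻¹
            *ᵥ fun i => A i k))⁻¹ := by
  have hcofac : ∀ k, cofac A k ^ 2 ≠ 0 := fun k =>
    pow_ne_zero 2 (mul_ne_zero (pow_ne_zero _ (by norm_num)) (hinv k).ne_zero)
  have hpos : 0 < ∑ k, cofac A k ^ 2 :=
    Finset.sum_pos' (fun k _ => sq_nonneg _)
      ⟨0, Finset.mem_univ 0, (sq_nonneg _).lt_of_ne (hcofac 0).symm⟩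
  have hgram := sum_cofac_sq_eq_det_mul_transpose A hpos.ne'
  refine ⟨hgram, fun k => ?_⟩
  rw [div_pow, Real.sq_sqrt hpos.le, hgram, det_mul_transpose_eq_cofac_sq_mul A k (hinv k),
    div_mul_cancel_left₀ (hcofac k)]
end

section
/- (Rank-one resolvent trace perturbation bound.) Let S be a symmetric positive semidefinite i×i real matrix, b ∈ ℝ^i, and α > 0. Then tr( (S + α·I_i)^{−1} ) − tr( (S + b·b^T + α·I_i)^{−1} ) = b^T·(S + α·I_i)^{−2}·b / ( 1 + b^T·(S + α·I_i)^{−1}·b ), and this quantity lies in the interval [0, α^{−1}]. -/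
open Matrix

/-!
With `A = S + α • 1`, Sherman–Morrison gives
`(A + b bᵀ)⁻¹ = A⁻¹ - (A⁻¹ b)(bᵀ A⁻¹) / (1 + bᵀ A⁻¹ b)`, and taking traces yields the identity.
For the bounds put `c = A⁻¹ b`: the numerator is `c ⬝ᵥ c ≥ 0`, while the denominator is
`1 + c ⬝ᵥ A c ≥ 1 + α (c ⬝ᵥ c)` because `S` is positive semidefinite, so the ratio is at most `α⁻¹`.
-/

namespace Matrix

variable {n : Type*} [DecidableEq n]

theorem PosSemidef.posDef_add_smul_one {S : Matrix n n ℝ} (hS : S.PosSemidef) {α : ℝ}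
    (hα : 0 < α) : (S + α • 1).PosDef :=
  PosDef.posSemidef_add hS (PosDef.one.smul hα)

variable [Fintype n]

section Field

variable {K : Type*} [Field K]

theorem inv_add_vecMulVec {A : Matrix n n K} (hA : IsUnit A.det) {u v : n → K}
    (hd : 1 + v ⬝ᵥ (A⁻¹ *ᵥ u) ≠ 0) :
    (A + vecMulVec u v)⁻¹ =
      A⁻¹ - (1 + v ⬝ᵥ (A⁻¹ *ᵥ u))⁻¹ • vecMulVec (A⁻¹ *ᵥ u) (v ᵥ* A⁻¹) := by
  set d := v ⬝ᵥ (A⁻¹ *ᵥ u)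
  apply inv_eq_right_inv
  have hAw : A * vecMulVec (A⁻¹ *ᵥ u) (v ᵥ* A⁻¹) = vecMulVec u (v ᵥ* A⁻¹) := by
    rw [mul_vecMulVec, mulVec_mulVec, mul_nonsing_inv A hA, one_mulVec]
  have huw : vecMulVec u v * vecMulVec (A⁻¹ *ᵥ u) (v ᵥ* A⁻¹) = d • vecMulVec u (v ᵥ* A⁻¹) := by
    rw [vecMulVec_mul_vecMulVec, vecMulVec_smul]
  calc (A + vecMulVec u v) * (A⁻¹ - (1 + d)⁻¹ • vecMulVec (A⁻¹ *ᵥ u) (v ᵥ* A⁻¹))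
      = 1 + (1 - (1 + d)⁻¹ * (1 + d)) • vecMulVec u (v ᵥ* A⁻¹) := by
        rw [add_mul, mul_sub, mul_sub, Matrix.mul_smul, Matrix.mul_smul, mul_nonsing_inv A hA,
          hAw, huw, vecMulVec_mul, smul_smul]
        module
    _ = 1 := by rw [inv_mul_cancel₀ hd, sub_self, zero_smul, add_zero]

theorem trace_inv_sub_trace_inv_add_vecMulVec {A : Matrix n n K} (hA : IsUnit A.det)
    {u v : n → K} (hd : 1 + v ⬝ᵥ (A⁻¹ *ᵥ u) ≠ 0) :
    trace A⁻¹ - trace (A + vecMulVec u v)⁻¹ =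
      v ⬝ᵥ ((A⁻¹ * A⁻¹) *ᵥ u) / (1 + v ⬝ᵥ (A⁻¹ *ᵥ u)) := by
  rw [inv_add_vecMulVec hA hd, trace_sub, trace_smul, trace_vecMulVec, sub_sub_cancel,
    dotProduct_comm _ (v ᵥ* A⁻¹), ← dotProduct_mulVec, mulVec_mulVec, smul_eq_mul, inv_mul_eq_div]

end Field

theorem IsSymm.dotProduct_inv_mul_inv_mulVec {R : Type*} [CommRing R] {A : Matrix n n R}
    (hA : A.IsSymm) (v : n → R) :
    v ⬝ᵥ ((A⁻¹ * A⁻¹) *ᵥ v) = (A⁻¹ *ᵥ v) ⬝ᵥ (A⁻¹ *ᵥ v) := by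
  rw [← mulVec_mulVec, dotProduct_mulVec, ← mulVec_transpose, hA.inv.eq]

theorem PosSemidef.smul_dotProduct_self_le_dotProduct_add_smul_one_mulVec
    {S : Matrix n n ℝ} (hS : S.PosSemidef) (α : ℝ) (x : n → ℝ) :
    α * (x ⬝ᵥ x) ≤ x ⬝ᵥ ((S + α • 1) *ᵥ x) := by
  rw [add_mulVec, smul_mulVec, one_mulVec, dotProduct_add, dotProduct_smul, smul_eq_mul]
  simpa using hS.dotProduct_mulVec_nonneg x

theorem PosSemidef.smul_dotProduct_self_inv_mulVec_le {S : Matrix n n ℝ} (hS : S.PosSemidef)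
    {α : ℝ} (hα : 0 < α) (b : n → ℝ) :
    α * (((S + α • 1)⁻¹ *ᵥ b) ⬝ᵥ ((S + α • 1)⁻¹ *ᵥ b)) ≤ b ⬝ᵥ ((S + α • 1)⁻¹ *ᵥ b) := by
  have hA : IsUnit (S + α • 1 : Matrix n n ℝ).det :=
    (isUnit_iff_isUnit_det _).mp (hS.posDef_add_smul_one hα).isUnit
  have hb : (S + α • 1) *ᵥ ((S + α • 1)⁻¹ *ᵥ b) = b := by
    rw [mulVec_mulVec, mul_nonsing_inv _ hA, one_mulVec]
  have := hS.smul_dotProduct_self_le_dotProduct_add_smul_one_mulVec α ((S + α • 1)⁻¹ *ᵥ b)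
  rwa [hb, dotProduct_comm _ b] at this

end Matrix

/-- **Rank-one resolvent trace perturbation bound.**
For a symmetric positive semidefinite `i × i` real matrix `S`, a vector `b ∈ ℝ^i` and
`α > 0`, `tr((S + α I)⁻¹) - tr((S + b bᵀ + α I)⁻¹)` equals
`bᵀ (S + α I)⁻² b / (1 + bᵀ (S + α I)⁻¹ b)` and lies in `[0, α⁻¹]`. -/
theorem rank_one_resolvent_trace_perturbation (i : ℕ) (S : Matrix (Fin i) (Fin i) ℝ)
    (hS : S.PosSemidef) (b : Fin i → ℝ) (α : ℝ) (hα : 0 < α) :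
    Matrix.trace ((S + α • (1 : Matrix (Fin i) (Fin i) ℝ))⁻¹) -
        Matrix.trace ((S + Matrix.vecMulVec b b + α • (1 : Matrix (Fin i) (Fin i) ℝ))⁻¹) =
      b ⬝ᵥ (((S + α • (1 : Matrix (Fin i) (Fin i) ℝ))⁻¹ *
          (S + α • (1 : Matrix (Fin i) (Fin i) ℝ))⁻¹) *ᵥ b) /
        (1 + b ⬝ᵥ ((S + α • (1 : Matrix (Fin i) (Fin i) ℝ))⁻¹ *ᵥ b)) ∧
    0 ≤ Matrix.trace ((S + α • (1 : Matrix (Fin i) (Fin i) ℝ))⁻¹) -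
        Matrix.trace ((S + Matrix.vecMulVec b b + α • (1 : Matrix (Fin i) (Fin i) ℝ))⁻¹) ∧
    Matrix.trace ((S + α • (1 : Matrix (Fin i) (Fin i) ℝ))⁻¹) -
        Matrix.trace ((S + Matrix.vecMulVec b b + α • (1 : Matrix (Fin i) (Fin i) ℝ))⁻¹)
      ≤ α⁻¹ := by
  have hApd := hS.posDef_add_smul_one hα
  have hA : IsUnit (S + α • 1 : Matrix (Fin i) (Fin i) ℝ).det :=
    (isUnit_iff_isUnit_det _).mp hApd.isUnit
  have hN : b ⬝ᵥ (((S + α • 1)⁻¹ * (S + α • 1)⁻¹) *ᵥ b) =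
      ((S + α • 1)⁻¹ *ᵥ b) ⬝ᵥ ((S + α • 1)⁻¹ *ᵥ b) :=
    (isHermitian_iff_isSymm.mp hApd.isHermitian).dotProduct_inv_mul_inv_mulVec b
  have hαN := hS.smul_dotProduct_self_inv_mulVec_le hα b
  set N := ((S + α • 1)⁻¹ *ᵥ b) ⬝ᵥ ((S + α • 1)⁻¹ *ᵥ b)
  set d := b ⬝ᵥ ((S + α • 1)⁻¹ *ᵥ b)
  have hN0 : 0 ≤ N := by simpa using dotProduct_star_self_nonneg ((S + α • 1)⁻¹ *ᵥ b)
  have hd0 : 0 ≤ d := (mul_nonneg hα.le hN0).trans hαN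
  rw [add_right_comm, trace_inv_sub_trace_inv_add_vecMulVec hA (by positivity), hN]
  refine ⟨rfl, by positivity, ?_⟩
  rw [div_le_iff₀ (by positivity), le_inv_mul_iff₀ hα]
  linarith
end
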